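/- arXiv:1710.08209 — 8 statements merged into one kernel-verified Lean document; each statement's English description precedes it below -/
import Mathlib

section
/- Let σ ≥ 0, ϑ ≥ 0, ν₀, ν₁ ≥ 0 with ν₀ + ν₁ = 1, and let H(x,n) = (1−x)ⁿ. Then for every x ∈ [0,1] and every natural number n ≥ 1, the generator duality identity holds: (1/2)·x(1−x)·n(n−1)·(1−x)^{n−2} − (σ·x(1−x) − ϑ·ν₁·x + ϑ·ν₀·(1−x))·n·(1−x)^{n−1} = (n(n−1)/2)·((1−x)^{n−1} − (1−x)ⁿ) + σ·n·((1−x)^{n+1} − (1−x)ⁿ) + ϑ·ν₁·n·((1−x)^{n−1} − (1−x)ⁿ) − ϑ·ν₀·n·(1−x)ⁿ. That is, applying the Wright–Fisher diffusion generator G^X f(x) = (1/2)x(1−x)f″(x) + (σx(1−x) − ϑν₁x + ϑν₀(1−x))f′(x) to x ↦ (1−x)ⁿ gives the same result as applying the generator of the line-counting process of the killed ancestral selection graph, G^R g(n) = (n choose 2)(g(n−1)−g(n)) + σn(g(n+1)−g(n)) + ϑν₁n(g(n−1)−g(n)) − ϑν₀·n·g(n), to n ↦ (1−x)ⁿ.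 -/
/-- Generator duality identity between the Wright–Fisher diffusion generator
applied to `x ↦ (1−x)ⁿ` and the generator of the line-counting process of the
killed ASG applied to `n ↦ (1−x)ⁿ`. -/
theorem stmt_4 (σ ϑ ν₀ ν₁ : ℝ) (hσ : 0 ≤ σ) (hϑ : 0 ≤ ϑ)
    (hν₀ : 0 ≤ ν₀) (hν₁ : 0 ≤ ν₁) (hν : ν₀ + ν₁ = 1) :
    ∀ x ∈ Set.Icc (0 : ℝ) 1, ∀ n : ℕ, 1 ≤ n →
      (1 / 2) * x * (1 - x) * ((n : ℝ) * ((n : ℝ) - 1)) * (1 - x) ^ (n - 2)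
        - (σ * x * (1 - x) - ϑ * ν₁ * x + ϑ * ν₀ * (1 - x)) * (n : ℝ) * (1 - x) ^ (n - 1)
      = ((n : ℝ) * ((n : ℝ) - 1) / 2) * ((1 - x) ^ (n - 1) - (1 - x) ^ n)
        + σ * (n : ℝ) * ((1 - x) ^ (n + 1) - (1 - x) ^ n)
        + ϑ * ν₁ * (n : ℝ) * ((1 - x) ^ (n - 1) - (1 - x) ^ n)
        - ϑ * ν₀ * (n : ℝ) * (1 - x) ^ n := by
  intro x hx n hn
  match n, hn with
  | 1, _ => norm_num; ring
  | (m + 2), _ =>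
    simp only [Nat.add_sub_cancel, Nat.succ_sub_one, Nat.cast_add, Nat.cast_ofNat,
      Nat.cast_one]
    ring
end

section
/- Let s ≥ 0, u ≥ 0, ν₀, ν₁ ≥ 0 with ν₀ + ν₁ = 1, and let z : [0,∞) → [0,1] be a solution of the deterministic mutation–selection equation ż = s·z(1−z) + u·ν₀·(1−z) − u·ν₁·z. For n ∈ ℕ define F_n(t) = (1 − z(t))ⁿ. Then for every n ≥ 1 and t ≥ 0, F_n′(t) = n·s·(F_{n+1}(t) − F_n(t)) + n·u·ν₁·(F_{n−1}(t) − F_n(t)) − n·u·ν₀·F_n(t). (This is the generator duality between the deterministic mutation–selection equation and the line-counting process of the killed ASG in the deterministic limit, which has rates q(n,n+1) = ns, q(n,n−1) = nuν₁, q(n,Δ) = nuν₀.) -/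
/-- The duality identity `G_z (1 - z)ⁿ = L_n (1 - z)ⁿ` between the drift of the
mutation–selection equation and the generator of the killed ASG line-counting process,
with `n = m + 1` so that `n - 1` is not truncated. -/
theorem drift_mul_pow_eq_lineCounting_generator (s u ν₀ ν₁ x : ℝ) (m : ℕ) :
    ((m + 1 : ℕ) : ℝ) * (1 - x) ^ m * -(s * x * (1 - x) + u * ν₀ * (1 - x) - u * ν₁ * x)
      = ((m + 1 : ℕ) : ℝ) * s * ((1 - x) ^ (m + 1 + 1) - (1 - x) ^ (m + 1))
        + ((m + 1 : ℕ) : ℝ) * u * ν₁ * ((1 - x) ^ m - (1 - x) ^ (m + 1))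
        - ((m + 1 : ℕ) : ℝ) * u * ν₀ * (1 - x) ^ (m + 1) := by
  ring

theorem stmt_5_general
    (s u ν₀ ν₁ : ℝ)
    (z : ℝ → ℝ)
    (hode : ∀ t : ℝ, 0 ≤ t →
      HasDerivAt z (s * z t * (1 - z t) + u * ν₀ * (1 - z t) - u * ν₁ * z t) t) :
    ∀ n : ℕ, 1 ≤ n → ∀ t : ℝ, 0 ≤ t →
      HasDerivAt (fun τ => (1 - z τ) ^ n)
        ((n : ℝ) * s * ((1 - z t) ^ (n + 1) - (1 - z t) ^ n)
          + (n : ℝ) * u * ν₁ * ((1 - z t) ^ (n - 1) - (1 - z t) ^ n)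
          - (n : ℝ) * u * ν₀ * (1 - z t) ^ n) t := by
  intro n hn t ht
  obtain ⟨m, rfl⟩ := Nat.exists_eq_add_of_le' hn
  have hF : HasDerivAt (fun τ => (1 - z τ) ^ (m + 1)) _ t :=
    ((hode t ht).const_sub 1).pow (m + 1)
  rw [Nat.add_sub_cancel, ← drift_mul_pow_eq_lineCounting_generator]
  exact hF

/-- Generator duality in the deterministic limit: if `z` solves the
mutation–selection equation, then `F_n(t) = (1 − z(t))ⁿ` satisfies
`F_n′ = n·s·(F_{n+1} − F_n) + n·u·ν₁·(F_{n−1} − F_n) − n·u·ν₀·F_n`. -/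
theorem stmt_5 (s u ν₀ ν₁ : ℝ) (hs : 0 ≤ s) (hu : 0 ≤ u)
    (hν₀ : 0 ≤ ν₀) (hν₁ : 0 ≤ ν₁) (hν : ν₀ + ν₁ = 1)
    (z : ℝ → ℝ) (hz : ∀ t : ℝ, 0 ≤ t → z t ∈ Set.Icc (0 : ℝ) 1)
    (hode : ∀ t : ℝ, 0 ≤ t →
      HasDerivAt z (s * z t * (1 - z t) + u * ν₀ * (1 - z t) - u * ν₁ * z t) t) :
    ∀ n : ℕ, 1 ≤ n → ∀ t : ℝ, 0 ≤ t →
      HasDerivAt (fun τ => (1 - z τ) ^ n)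
        ((n : ℝ) * s * ((1 - z t) ^ (n + 1) - (1 - z t) ^ n)
          + (n : ℝ) * u * ν₁ * ((1 - z t) ^ (n - 1) - (1 - z t) ^ n)
          - (n : ℝ) * u * ν₀ * (1 - z t) ^ n) t :=
  stmt_5_general s u ν₀ ν₁ z hode
end

section
/- Let σ ≥ 0, ϑ > 0, ν₀ ∈ (0,1), ν₁ = 1 − ν₀, and for n ∈ ℕ₀ define I(n) = ∫₀¹ x^{2ϑν₀−1}(1−x)^{n+2ϑν₁−1}e^{2σx} dx. Then for every n ≥ 1 the recursion (n − 1 + 2σ + 2ϑ)·I(n) = 2σ·I(n+1) + (n − 1 + 2ϑν₁)·I(n−1) holds. Equivalently, the normalised sequence b(n) = I(n)/I(0) satisfies b(n) = (2σ/(n−1+2σ+2ϑ))·b(n+1) + ((n−1+2ϑν₁)/(n−1+2σ+2ϑ))·b(n−1) with b(0) = 1. -/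
/-!
Writing `x = 1 - (1 - x)`, the derivative of `x ^ (p + 1) * (1 - x) ^ q * exp (c * x)` on `(0, 1)`
is `(p + 1 + q + c) w(p, q) - q w(p, q - 1) - c w(p, q + 1)` for the weights
`w(p, q) = x ^ p * (1 - x) ^ q * exp (c * x)`. For `p > -1` and `q > 0` that primitive vanishes
at both endpoints, so integrating over `(0, 1)` gives a three-term recurrence in `q`; with
`c = 2σ`, `p = 2ϑν₀ - 1`, `q = n - 1 + 2ϑν₁` it is the recursion for `I`, and dividing by
`I 0 > 0` gives the one for `b`.
-/

open MeasureTheory Set Real intervalIntegral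

noncomputable def betaExpWeight (c p q x : ℝ) : ℝ :=
  x ^ p * (1 - x) ^ q * exp (c * x)

noncomputable def betaExpMoment (c p q : ℝ) : ℝ :=
  ∫ x in Ioo (0 : ℝ) 1, betaExpWeight c p q x

lemma intervalIntegrable_rpow_mul_one_sub_rpow_left {p : ℝ} (hp : -1 < p) (q : ℝ) :
    IntervalIntegrable (fun x : ℝ => x ^ p * (1 - x) ^ q) volume 0 (1 / 2) := by
  refine (intervalIntegrable_rpow' hp).mul_continuousOn ?_
  refine (continuousOn_const.sub continuousOn_id).rpow_const fun x hx => Or.inl ?_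
  rw [uIcc_of_le (by norm_num)] at hx
  show 1 - x ≠ 0
  linarith [hx.2]

lemma intervalIntegrable_rpow_mul_one_sub_rpow {p q : ℝ} (hp : -1 < p) (hq : -1 < q) :
    IntervalIntegrable (fun x : ℝ => x ^ p * (1 - x) ^ q) volume 0 1 := by
  refine (intervalIntegrable_rpow_mul_one_sub_rpow_left hp q).trans ?_
  -- the right half is the left half for `(q, p)` reflected by `x ↦ 1 - x`
  have h := (intervalIntegrable_rpow_mul_one_sub_rpow_left hq p).comp_sub_left 1
  norm_num at h
  simpa only [mul_comm] using h.symm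

lemma intervalIntegrable_betaExpWeight (c : ℝ) {p q : ℝ} (hp : -1 < p) (hq : -1 < q) :
    IntervalIntegrable (betaExpWeight c p q) volume 0 1 :=
  (intervalIntegrable_rpow_mul_one_sub_rpow hp hq).mul_continuousOn (by fun_prop)

lemma betaExpMoment_pos (c : ℝ) {p q : ℝ} (hp : -1 < p) (hq : -1 < q) :
    0 < betaExpMoment c p q := by
  rw [betaExpMoment, ← integral_Ioc_eq_integral_Ioo, ← integral_of_le zero_le_one]
  refine intervalIntegral_pos_of_pos_on (intervalIntegrable_betaExpWeight c hp hq)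
    (fun x hx => ?_) zero_lt_one
  have hx0 : 0 < x := hx.1
  have hx1 : 0 < 1 - x := sub_pos.mpr hx.2
  unfold betaExpWeight
  positivity

lemma hasDerivAt_rpow_mul_one_sub_rpow_mul_exp (c p q : ℝ) {x : ℝ} (hx : x ∈ Ioo (0 : ℝ) 1) :
    HasDerivAt (fun y => y ^ (p + 1) * (1 - y) ^ q * exp (c * y))
      ((p + 1 + q + c) * betaExpWeight c p q x - q * betaExpWeight c p (q - 1) x
        - c * betaExpWeight c p (q + 1) x) x := by
  have hx0 : x ≠ 0 := hx.1.ne'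
  have hx1 : 1 - x ≠ 0 := (sub_pos.mpr hx.2).ne'
  have hpow : HasDerivAt (fun y : ℝ => y ^ (p + 1)) ((p + 1) * x ^ p) x := by
    simpa using hasDerivAt_rpow_const (p := p + 1) (Or.inl hx0)
  have hpow' : HasDerivAt (fun y : ℝ => (1 - y) ^ q) (-1 * q * (1 - x) ^ (q - 1)) x :=
    ((hasDerivAt_id x).const_sub 1).rpow_const (Or.inl hx1)
  have hexp : HasDerivAt (fun y => exp (c * y)) (exp (c * x) * c) x := by
    simpa using ((hasDerivAt_id x).const_mul c).exp
  refine ((hpow.mul hpow').mul hexp).congr_deriv ?_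
  have hxp : x ^ (p + 1) = x ^ p * (1 - (1 - x)) := by rw [rpow_add_one hx0]; ring
  have hxq : (1 - x) ^ q = (1 - x) ^ (q - 1) * (1 - x) := by
    rw [← rpow_add_one hx1, sub_add_cancel]
  simp only [betaExpWeight, Pi.mul_apply, hxp, hxq, rpow_add_one hx1]
  ring

theorem betaExpMoment_recurrence (c : ℝ) {p q : ℝ} (hp : -1 < p) (hq : 0 < q) :
    (p + 1 + q + c) * betaExpMoment c p q
      = q * betaExpMoment c p (q - 1) + c * betaExpMoment c p (q + 1) := by
  have hw := intervalIntegrable_betaExpWeight c hp (by linarith : -1 < q)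
  have hw_sub := intervalIntegrable_betaExpWeight c hp (by linarith : -1 < q - 1)
  have hw_add := intervalIntegrable_betaExpWeight c hp (by linarith : -1 < q + 1)
  have hcont : ContinuousOn (fun y => y ^ (p + 1) * (1 - y) ^ q * exp (c * y)) (Icc 0 1) := by
    refine ContinuousOn.mul (ContinuousOn.mul ?_ ?_) (by fun_prop)
    · exact continuousOn_id.rpow_const fun _ _ => Or.inr (by linarith)
    · exact (continuousOn_const.sub continuousOn_id).rpow_const fun _ _ => Or.inr hq.le
  have hFTC := integral_eq_sub_of_hasDeriv_right_of_le zero_le_one hcont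
    (fun x hx => (hasDerivAt_rpow_mul_one_sub_rpow_mul_exp c p q hx).hasDerivWithinAt)
    (((hw.const_mul _).sub (hw_sub.const_mul _)).sub (hw_add.const_mul _))
  -- the primitive vanishes at both ends of `[0, 1]`
  rw [integral_sub ((hw.const_mul _).sub (hw_sub.const_mul _)) (hw_add.const_mul _),
    integral_sub (hw.const_mul _) (hw_sub.const_mul _), intervalIntegral.integral_const_mul,
    intervalIntegral.integral_const_mul, intervalIntegral.integral_const_mul, sub_self,
    zero_rpow hq.ne', zero_rpow (by linarith : p + 1 ≠ 0)] at hFTC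
  simp only [integral_of_le zero_le_one, integral_Ioc_eq_integral_Ioo] at hFTC
  simp only [betaExpMoment]
  linarith

/-- The moments `I(n) = ∫₀¹ x^{2ϑν₀−1}(1−x)^{n+2ϑν₁−1}e^{2σx} dx` of Wright's
distribution satisfy the sampling recursion of the killed ASG; equivalently,
`b(n) = I(n)/I(0)` satisfies the normalised sampling recursion with `b(0)=1`. -/
theorem stmt_8 (σ ϑ ν₀ ν₁ : ℝ) (hσ : 0 ≤ σ) (hϑ : 0 < ϑ)
    (hν₀ : ν₀ ∈ Set.Ioo (0 : ℝ) 1) (hν₁ : ν₁ = 1 - ν₀)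
    (I : ℕ → ℝ)
    (hI : I = fun n : ℕ => ∫ x in Set.Ioo (0 : ℝ) 1,
      x ^ (2 * ϑ * ν₀ - 1) * (1 - x) ^ ((n : ℝ) + 2 * ϑ * ν₁ - 1)
        * Real.exp (2 * σ * x))
    (b : ℕ → ℝ) (hb : b = fun n => I n / I 0) :
    (∀ n : ℕ, 1 ≤ n →
      ((n : ℝ) - 1 + 2 * σ + 2 * ϑ) * I n
        = 2 * σ * I (n + 1) + ((n : ℝ) - 1 + 2 * ϑ * ν₁) * I (n - 1)) ∧
    b 0 = 1 ∧
    (∀ n : ℕ, 1 ≤ n →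
      b n = (2 * σ / ((n : ℝ) - 1 + 2 * σ + 2 * ϑ)) * b (n + 1)
        + (((n : ℝ) - 1 + 2 * ϑ * ν₁) / ((n : ℝ) - 1 + 2 * σ + 2 * ϑ)) * b (n - 1)) := by
  have hp : -1 < 2 * ϑ * ν₀ - 1 := by nlinarith [hν₀.1]
  have hν₁_pos : 0 < 2 * ϑ * ν₁ := by nlinarith [hν₀.2]
  have hI_eq (n : ℕ) : I n = betaExpMoment (2 * σ) (2 * ϑ * ν₀ - 1) (n + 2 * ϑ * ν₁ - 1) := by
    rw [hI]; rfl
  have hI_pos : 0 < I 0 := by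
    rw [hI_eq]
    exact betaExpMoment_pos _ hp (by push_cast; linarith)
  have hrec (n : ℕ) (hn : 1 ≤ n) : ((n : ℝ) - 1 + 2 * σ + 2 * ϑ) * I n
      = 2 * σ * I (n + 1) + ((n : ℝ) - 1 + 2 * ϑ * ν₁) * I (n - 1) := by
    obtain ⟨m, rfl⟩ := Nat.exists_eq_add_of_le' hn
    have key := betaExpMoment_recurrence (2 * σ) hp (q := m + 2 * ϑ * ν₁) (by positivity)
    rw [hI_eq, hI_eq, hI_eq, Nat.add_sub_cancel]
    push_cast
    rw [show (m : ℝ) + 1 + 2 * ϑ * ν₁ - 1 = m + 2 * ϑ * ν₁ by ring,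
      show (m : ℝ) + 1 + 1 + 2 * ϑ * ν₁ - 1 = m + 2 * ϑ * ν₁ + 1 by ring]
    subst hν₁
    linear_combination key
  refine ⟨hrec, by simp [hb, hI_pos.ne'], fun n hn => ?_⟩
  have hD : 0 < (n : ℝ) - 1 + 2 * σ + 2 * ϑ := by
    have : (1 : ℝ) ≤ n := by exact_mod_cast hn
    linarith
  rw [hb]
  field_simp
  linear_combination hrec n hn
end

section
/- Let σ ≥ 0, ϑ > 0, ν₁ ∈ (0,1). Suppose b, b̃ : ℕ₀ → ℝ are two bounded sequences that both satisfy the recursion b(n) = (2σ/(n−1+2σ+2ϑ))·b(n+1) + ((n−1+2ϑν₁)/(n−1+2σ+2ϑ))·b(n−1) for all n ≥ 1, together with the boundary conditions b(0) = b̃(0) = 1 and lim_{n→∞} b(n) = lim_{n→∞} b̃(n) = 0. Then b(n) = b̃(n) for all n. -/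
open Filter

private lemma stmt_10_aux (σ ϑ ν₁ : ℝ) (hσ : 0 < σ) (hϑ : 0 < ϑ)
    (hν0 : 0 < ν₁) (hν2 : ν₁ < 1) (d : ℕ → ℝ)
    (hrec : ∀ m : ℕ, 2 * σ * d (m + 2)
      = ((m : ℝ) + 2 * σ + 2 * ϑ) * d (m + 1) - ((m : ℝ) + 2 * ϑ * ν₁) * d m)
    (hd0 : d 0 = 0) (hd1 : 0 < d 1) (hlim : Tendsto d atTop (nhds 0)) : False := by
  have key : ∀ m : ℕ, d 1 ≤ d (m + 1) ∧ d m ≤ d (m + 1) := by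
    intro m
    induction m with
    | zero => exact ⟨le_refl _, by rw [hd0]; exact hd1.le⟩
    | succ k ih =>
      obtain ⟨h1, h2⟩ := ih
      have hk := hrec k
      have hdk1 : 0 < d (k + 1) := lt_of_lt_of_le hd1 h1
      have e : 2 * σ * (d (k + 2) - d (k + 1))
          = ((k : ℝ) + 2 * ϑ * ν₁) * (d (k + 1) - d k)
            + 2 * ϑ * (1 - ν₁) * d (k + 1) := by linear_combination hk
      have pos1 : 0 ≤ ((k : ℝ) + 2 * ϑ * ν₁) * (d (k + 1) - d k) := by
        apply mul_nonneg
        · positivity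
        · linarith
      have pos2 : 0 ≤ 2 * ϑ * (1 - ν₁) * d (k + 1) := by
        apply mul_nonneg
        · nlinarith
        · exact hdk1.le
      have step : d (k + 1) ≤ d (k + 2) := by nlinarith
      exact ⟨h1.trans step, step⟩
  have hev : ∀ᶠ n in atTop, d n < d 1 := by
    have := hlim.eventually (eventually_lt_nhds hd1)
    simpa using this
  obtain ⟨N, hN⟩ := eventually_atTop.1 hev
  have h1 := hN (N + 1) (by omega)
  have h2 := (key N).1
  linarith

/-- Uniqueness of bounded solutions of the sampling recursion of the killed
ASG with boundary conditions `b(0) = 1` and `b(n) → 0`. -/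
theorem stmt_10 (σ ϑ ν₁ : ℝ) (hσ : 0 ≤ σ) (hϑ : 0 < ϑ)
    (hν₁ : ν₁ ∈ Set.Ioo (0 : ℝ) 1)
    (b b' : ℕ → ℝ)
    (hbdd : ∃ C : ℝ, ∀ n, |b n| ≤ C) (hbdd' : ∃ C : ℝ, ∀ n, |b' n| ≤ C)
    (hrec : ∀ n : ℕ, 1 ≤ n →
      b n = (2 * σ / ((n : ℝ) - 1 + 2 * σ + 2 * ϑ)) * b (n + 1)
        + (((n : ℝ) - 1 + 2 * ϑ * ν₁) / ((n : ℝ) - 1 + 2 * σ + 2 * ϑ)) * b (n - 1))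
    (hrec' : ∀ n : ℕ, 1 ≤ n →
      b' n = (2 * σ / ((n : ℝ) - 1 + 2 * σ + 2 * ϑ)) * b' (n + 1)
        + (((n : ℝ) - 1 + 2 * ϑ * ν₁) / ((n : ℝ) - 1 + 2 * σ + 2 * ϑ)) * b' (n - 1))
    (h0 : b 0 = 1) (h0' : b' 0 = 1)
    (hlim : Tendsto b atTop (nhds 0)) (hlim' : Tendsto b' atTop (nhds 0)) :
    ∀ n, b n = b' n := by
  obtain ⟨hν0, hν2⟩ := hν₁
  set d : ℕ → ℝ := fun n => b n - b' n with hd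
  have hden : ∀ m : ℕ, (0 : ℝ) < (m : ℝ) + 2 * σ + 2 * ϑ := by
    intro m
    have : (0 : ℝ) ≤ (m : ℝ) := Nat.cast_nonneg m
    linarith
  have hrecd : ∀ m : ℕ, 2 * σ * d (m + 2)
      = ((m : ℝ) + 2 * σ + 2 * ϑ) * d (m + 1) - ((m : ℝ) + 2 * ϑ * ν₁) * d m := by
    intro m
    have h1 := hrec (m + 1) (by omega)
    have h2 := hrec' (m + 1) (by omega)
    have hc : ((m + 1 : ℕ) : ℝ) - 1 = (m : ℝ) := by push_cast; ring
    rw [hc, Nat.add_sub_cancel] at h1 h2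
    have hne := (hden m).ne'
    field_simp at h1 h2
    simp only [hd]
    ring_nf
    ring_nf at h1 h2
    nlinarith [h1, h2]
  have hd0 : d 0 = 0 := by simp [hd, h0, h0']
  have hdlim : Tendsto d atTop (nhds 0) := by
    have := hlim.sub hlim'
    simpa using this
  rcases eq_or_lt_of_le hσ with hσ0 | hσpos
  · -- σ = 0
    intro n
    induction n with
    | zero => rw [h0, h0']
    | succ k ih =>
      have hk := hrecd k
      have hdk : d k = 0 := by simp [hd, ih]
      rw [← hσ0, hdk] at hk
      have hne : ((k : ℝ) + 2 * 0 + 2 * ϑ) ≠ 0 := by positivity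
      have h' : ((k : ℝ) + 2 * 0 + 2 * ϑ) * d (k + 1) = 0 := by linear_combination -hk
      have : d (k + 1) = 0 := by
        rcases mul_eq_zero.mp h' with h | h
        · exact absurd h hne
        · exact h
      simp only [hd] at this
      linarith
  · -- σ > 0
    have hd1 : d 1 = 0 := by
      by_contra h
      rcases lt_or_gt_of_ne h with hneg | hpos
      · exact stmt_10_aux σ ϑ ν₁ hσpos hϑ hν0 hν2 (fun n => -d n)
          (fun m => by linear_combination -(hrecd m))
          (by simp [hd0]) (by simpa using hneg) (by simpa using hdlim.neg)
      · exact stmt_10_aux σ ϑ ν₁ hσpos hϑ hν0 hν2 d hrecd hd0 hpos hdlim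
    have hall : ∀ n, d n = 0 ∧ d (n + 1) = 0 := by
      intro n
      induction n with
      | zero => exact ⟨hd0, hd1⟩
      | succ k ih =>
        obtain ⟨ha, hb⟩ := ih
        have hk := hrecd k
        rw [ha, hb] at hk
        have : d (k + 2) = 0 := by
          have h2σ : (2 : ℝ) * σ ≠ 0 := by positivity
          have hk' : 2 * σ * d (k + 2) = 0 := by linear_combination hk
          rcases mul_eq_zero.mp hk' with h | h
          · exact absurd h h2σ
          · exact h
        exact ⟨hb, this⟩
    intro n
    have := (hall n).1
    simp only [hd] at this
    linarith
end

section
/- Let s > 0, u > 0, ν₀ ∈ (0,1], ν₁ = 1 − ν₀. Then the equation w = (u·ν₁)/(u+s) + (s/(u+s))·w², i.e. the quadratic s·w² − (u+s)·w + u·ν₁ = 0, has a unique solution w in the interval [0,1], and this solution equals 1 − z∞, where z∞ = (1/2)·(1 − u/s + √((1 − u/s)² + 4·(u/s)·ν₀)). -/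
set_option maxHeartbeats 1000000 in
/-- The quadratic `s·w² − (u+s)·w + u·ν₁ = 0` has a unique solution in `[0,1]`,
namely `w = 1 − z∞`. -/
theorem stmt_11 (s u ν₀ ν₁ : ℝ) (hs : 0 < s) (hu : 0 < u)
    (hν₀ : ν₀ ∈ Set.Ioc (0 : ℝ) 1) (hν₁ : ν₁ = 1 - ν₀)
    (zinf : ℝ)
    (hzinf : zinf = (1 / 2) * (1 - u / s + Real.sqrt ((1 - u / s) ^ 2 + 4 * (u / s) * ν₀))) :
    (1 - zinf ∈ Set.Icc (0 : ℝ) 1 ∧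
      s * (1 - zinf) ^ 2 - (u + s) * (1 - zinf) + u * ν₁ = 0) ∧
    ∀ w ∈ Set.Icc (0 : ℝ) 1, s * w ^ 2 - (u + s) * w + u * ν₁ = 0 → w = 1 - zinf := by
  obtain ⟨hν₀0, hν₀1⟩ := hν₀
  subst hν₁ hzinf
  set r := Real.sqrt ((1 - u / s) ^ 2 + 4 * (u / s) * ν₀) with hrdef
  have hD : (0:ℝ) ≤ (1 - u / s) ^ 2 + 4 * (u / s) * ν₀ := by positivity
  have hr0 : 0 ≤ r := Real.sqrt_nonneg _
  have hr2 : r ^ 2 = (1 - u / s) ^ 2 + 4 * (u / s) * ν₀ := Real.sq_sqrt hD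
  have hsne : s ≠ 0 := ne_of_gt hs
  have hr2' : s ^ 2 * r ^ 2 = (s - u) ^ 2 + 4 * s * u * ν₀ := by
    rw [hr2]; field_simp
  have hsr0 : 0 ≤ s * r := mul_nonneg hs.le hr0
  have hsr : s - u < s * r := by
    by_contra h; push_neg at h
    have h1 : (s * r) ^ 2 ≤ (s - u) ^ 2 := by nlinarith
    nlinarith [mul_pos (mul_pos hs hu) hν₀0]
  have hsr2 : u - s < s * r := by
    by_contra h; push_neg at h
    have h1 : (s * r) ^ 2 ≤ (u - s) ^ 2 := by nlinarith
    nlinarith [mul_pos (mul_pos hs hu) hν₀0]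
  have hsr' : s * r ≤ s + u := by
    by_contra h; push_neg at h
    have h1 : (s + u) ^ 2 < (s * r) ^ 2 := by nlinarith
    nlinarith [mul_nonneg (mul_pos hs hu).le (sub_nonneg.mpr hν₀1)]
  have hz : s * (1 - (1 / 2) * (1 - u / s + r)) = (s + u - s * r) / 2 := by
    field_simp; ring
  have heq0 : s * (1 - (1 / 2) * (1 - u / s + r)) ^ 2 -
      (u + s) * (1 - (1 / 2) * (1 - u / s + r)) + u * (1 - ν₀) = 0 := by
    field_simp
    nlinarith [hr2']
  refine ⟨⟨⟨?_, ?_⟩, heq0⟩, ?_⟩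
  · have h1 : 0 ≤ s * (1 - (1 / 2) * (1 - u / s + r)) := by rw [hz]; linarith
    exact le_of_mul_le_mul_left (by linarith : s * 0 ≤ s * (1 - (1 / 2) * (1 - u / s + r))) hs
  · have h2 : s * (1 - (1 / 2) * (1 - u / s + r)) ≤ s * 1 := by rw [hz]; linarith
    exact le_of_mul_le_mul_left h2 hs
  · rintro w ⟨hw0, hw1⟩ heq
    have hfac : (w - (1 - (1 / 2) * (1 - u / s + r))) *
        (s * (w + (1 - (1 / 2) * (1 - u / s + r))) - (u + s)) = 0 := by
      linear_combination heq - heq0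
    have hsw : s * w ≤ s := by
      have := mul_le_mul_of_nonneg_left hw1 hs.le; linarith
    have hneg : s * (w + (1 - (1 / 2) * (1 - u / s + r))) - (u + s) < 0 := by
      have : s * (w + (1 - (1 / 2) * (1 - u / s + r)))
          = s * w + s * (1 - (1 / 2) * (1 - u / s + r)) := by ring
      rw [this, hz]; linarith
    rcases mul_eq_zero.mp hfac with h | h
    · linarith
    · exact absurd h (ne_of_lt hneg)
end

section
/- Let s > 0, u > 0, ν₀ ∈ [0,1), ν₁ = 1 − ν₀ > 0, and suppose ν₀ > 0 or u > s. Then p = (1/2)·((u+s)/(uν₁) − √(((u+s)/(uν₁))² − 4s/(uν₁))) satisfies p = (s/(u·ν₁))·(1 − z∞), where z∞ = (1/2)·(1 − u/s + √((1 − u/s)² + 4·(u/s)·ν₀)). -/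
/-- Relation between the geometric parameter `p` of the pruned lookdown ASG
and the equilibrium frequency `z∞`: `p = (s/(uν₁))·(1 − z∞)`. -/
theorem stmt_14 (s u ν₀ ν₁ : ℝ) (hs : 0 < s) (hu : 0 < u)
    (hν₀ : ν₀ ∈ Set.Ico (0 : ℝ) 1) (hν₁ : ν₁ = 1 - ν₀)
    (hcase : 0 < ν₀ ∨ s < u)
    (p zinf : ℝ)
    (hp : p = (1 / 2) * ((u + s) / (u * ν₁)
      - Real.sqrt (((u + s) / (u * ν₁)) ^ 2 - 4 * s / (u * ν₁))))
    (hzinf : zinf = (1 / 2) * (1 - u / s + Real.sqrt ((1 - u / s) ^ 2 + 4 * (u / s) * ν₀))) :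
    p = (s / (u * ν₁)) * (1 - zinf) := by
  obtain ⟨hν₀0, hν₀1⟩ := hν₀
  have hν₁pos : 0 < ν₁ := by rw [hν₁]; linarith
  have hs' : s ≠ 0 := ne_of_gt hs
  have hu' : u ≠ 0 := ne_of_gt hu
  have hν₁' : ν₁ ≠ 0 := ne_of_gt hν₁pos
  have hc : 0 ≤ s / (u * ν₁) := by positivity
  have key : Real.sqrt (((u + s) / (u * ν₁)) ^ 2 - 4 * s / (u * ν₁))
      = (s / (u * ν₁)) * Real.sqrt ((1 - u / s) ^ 2 + 4 * (u / s) * ν₀) := by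
    rw [show ((u + s) / (u * ν₁)) ^ 2 - 4 * s / (u * ν₁)
        = (s / (u * ν₁)) ^ 2 * ((1 - u / s) ^ 2 + 4 * (u / s) * ν₀) by
      subst hν₁; field_simp; ring]
    rw [Real.sqrt_mul (sq_nonneg _), Real.sqrt_sq hc]
  rw [hp, hzinf, key]
  field_simp
  ring
end

section
/- Let s > 0, u > 0, ν₀ ∈ [0,1), ν₁ = 1 − ν₀ > 0, with ν₀ > 0 or u > s, and let p ∈ (0,1) be the root p = (1/2)·((u+s)/(uν₁) − √(((u+s)/(uν₁))² − 4s/(uν₁))) of uν₁p² − (u+s)p + s = 0. Define π(n) = (1−p)·p^{n−1} for n ≥ 1. Then π is a stationary distribution for the line-counting process of the pruned lookdown ASG in the deterministic limit; i.e., for every m ≥ 1 the balance equation π(m)·(m·s + (m−1)·u) = [if m ≥ 2] π(m−1)·(m−1)·s + π(m+1)·(m·u·ν₁ + u·ν₀) + u·ν₀·Σ_{n ≥ m+2} π(n) holds (with the first term absent for m = 1), where m·s + (m−1)·u is the total jump rate out of state m. -/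
/-- The geometric distribution `π(n) = (1−p)p^{n−1}` is stationary for the
line-counting process of the pruned lookdown ASG in the deterministic limit:
the probability flow out of each state `m ≥ 1` equals the flow into it. -/
theorem stmt_15 (s u ν₀ ν₁ : ℝ) (hs : 0 < s) (hu : 0 < u)
    (hν₀ : ν₀ ∈ Set.Ico (0 : ℝ) 1) (hν₁ : ν₁ = 1 - ν₀)
    (hcase : 0 < ν₀ ∨ s < u)
    (p : ℝ) (hp01 : p ∈ Set.Ioo (0 : ℝ) 1)
    (hp : p = (1 / 2) * ((u + s) / (u * ν₁)
      - Real.sqrt (((u + s) / (u * ν₁)) ^ 2 - 4 * s / (u * ν₁))))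
    (π : ℕ → ℝ) (hπ : π = fun n : ℕ => (1 - p) * p ^ (n - 1)) :
    ∀ m : ℕ, 1 ≤ m →
      π m * ((m : ℝ) * s + ((m : ℝ) - 1) * u)
        = (if 2 ≤ m then π (m - 1) * ((m : ℝ) - 1) * s else 0)
          + π (m + 1) * ((m : ℝ) * u * ν₁ + u * ν₀)
          + u * ν₀ * ∑' k : ℕ, π (m + 2 + k) := by
  obtain ⟨hp0, hp1⟩ := hp01
  subst hν₁
  have hν1pos : 0 < 1 - ν₀ := by linarith [hν₀.2]
  have huν : (0:ℝ) < u * (1 - ν₀) := mul_pos hu hν1pos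
  have huν' : u * (1 - ν₀) ≠ 0 := ne_of_gt huν
  set D : ℝ := ((u + s) / (u * (1 - ν₀))) ^ 2 - 4 * s / (u * (1 - ν₀)) with hD_def
  have hDval : D = ((u - s) ^ 2 + 4 * s * u * ν₀) / (u * (1 - ν₀)) ^ 2 := by
    rw [hD_def, div_pow, div_sub_div _ _ (pow_ne_zero 2 huν') huν']
    rw [div_eq_div_iff (by positivity) (by positivity)]
    ring
  have hD : 0 ≤ D := by
    rw [hDval]
    have h0 : 0 ≤ (u - s) ^ 2 + 4 * s * u * ν₀ := by
      have := hν₀.1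
      positivity
    positivity
  have hsqrt : Real.sqrt D = (u + s) / (u * (1 - ν₀)) - 2 * p := by
    rw [hp]; ring
  have hsq : ((u + s) / (u * (1 - ν₀)) - 2 * p) ^ 2 = D := by
    rw [← hsqrt, Real.sq_sqrt hD]
  have h4 : (u * (1 - ν₀)) ^ 2 * (((u + s) / (u * (1 - ν₀)) - 2 * p) ^ 2)
      = (u * (1 - ν₀)) ^ 2 * D := by rw [hsq]
  rw [hD_def] at h4
  have e : (u * (1 - ν₀)) ^ 2 * (((u + s) / (u * (1 - ν₀)) - 2 * p) ^ 2)
        - (u * (1 - ν₀)) ^ 2 * (((u + s) / (u * (1 - ν₀))) ^ 2 - 4 * s / (u * (1 - ν₀)))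
      = (4 * (u * (1 - ν₀))) * (u * (1 - ν₀) * p ^ 2 - (u + s) * p + s) := by
    field_simp
    ring
  have h5 : (4 * (u * (1 - ν₀))) * (u * (1 - ν₀) * p ^ 2 - (u + s) * p + s)
      = (4 * (u * (1 - ν₀))) * 0 := by
    rw [← e, h4, mul_zero]; ring
  have hQ : u * (1 - ν₀) * p ^ 2 - (u + s) * p + s = 0 :=
    mul_left_cancel₀ (by positivity) h5
  have hne : (1:ℝ) - p ≠ 0 := by linarith
  have htsum : ∀ m : ℕ, ∑' k : ℕ, π (m + 2 + k) = p ^ (m + 1) := by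
    intro m
    have h1 : ∀ k : ℕ, π (m + 2 + k) = ((1 - p) * p ^ (m + 1)) * p ^ k := by
      intro k
      rw [hπ]
      simp only []
      have : m + 2 + k - 1 = m + 1 + k := by omega
      rw [this, pow_add]
      ring
    rw [tsum_congr h1, tsum_mul_left, tsum_geometric_of_lt_one (le_of_lt hp0) hp1]
    rw [mul_comm (1 - p) (p ^ (m + 1)), mul_assoc, mul_inv_cancel₀ hne, mul_one]
  intro m hm
  obtain ⟨n, rfl⟩ : ∃ n, m = n + 1 := ⟨m - 1, by omega⟩
  rcases n with _ | j
  · simp only [Nat.reduceAdd, htsum]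
    rw [hπ]
    norm_num
    linear_combination hQ
  · have h2 : 2 ≤ j + 1 + 1 := by omega
    rw [if_pos h2, htsum, hπ]
    simp only []
    have e1 : j + 1 + 1 - 1 = j + 1 := by omega
    have e2 : j + 1 + 1 + 1 - 1 = j + 2 := by omega
    rw [e1, e2]
    push_cast
    linear_combination (((j:ℝ) + 2) * p - ((j:ℝ) + 1)) * p ^ j * hQ
end

section
/- Let σ ≥ 0, ϑ ≥ 0, ν₁ ∈ [0,1]. Suppose a, ã : ℕ₀ → ℝ are two bounded sequences that both satisfy Fearnhead's recursion ((n+1)/2 + σ + ϑ)·a_n = ((n+1)/2 + ϑ·ν₁)·a_{n+1} + σ·a_{n−1} for all n ≥ 1, together with the boundary conditions a₀ = ã₀ = 1 and lim_{n→∞} a_n = lim_{n→∞} ã_n = 0. Then a_n = ã_n for all n. -/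
/-!
The difference `d = a - a'` solves the recursion with `d 0 = 0` and `d n → 0`. Rewritten as
`((n+1)/2 + ϑν₁)(d (n+1) - d n) = ϑ(1 - ν₁) d n + σ (d n - d (n-1))`, the recursion shows that
a solution starting with `d 0 = 0 ≤ d 1` is nondecreasing, hence `d 1 ≤ lim d = 0`; applied to
`-d` this gives `d 1 = 0`. A solution is determined by its first two values, so `d = 0`.
-/

open Filter

/-- Fearnhead's recursion, required for `n ≥ 1` (so `n - 1` never truncates). -/
def IsFearnheadSol (σ ϑ ν₁ : ℝ) (a : ℕ → ℝ) : Prop :=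
  ∀ n : ℕ, 1 ≤ n →
    (((n : ℝ) + 1) / 2 + σ + ϑ) * a n
      = (((n : ℝ) + 1) / 2 + ϑ * ν₁) * a (n + 1) + σ * a (n - 1)

namespace IsFearnheadSol

variable {σ ϑ ν₁ : ℝ} {a b : ℕ → ℝ}

theorem sub (ha : IsFearnheadSol σ ϑ ν₁ a) (hb : IsFearnheadSol σ ϑ ν₁ b) :
    IsFearnheadSol σ ϑ ν₁ (a - b) := by
  intro n hn
  simp only [Pi.sub_apply]
  linear_combination ha n hn - hb n hn

theorem neg (ha : IsFearnheadSol σ ϑ ν₁ a) : IsFearnheadSol σ ϑ ν₁ (-a) := by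
  intro n hn
  simp only [Pi.neg_apply]
  linear_combination -ha n hn

theorem step (ha : IsFearnheadSol σ ϑ ν₁ a) (n : ℕ) :
    (((n : ℝ) + 2) / 2 + ϑ * ν₁) * (a (n + 2) - a (n + 1))
      = ϑ * (1 - ν₁) * a (n + 1) + σ * (a (n + 1) - a n) := by
  have h := ha (n + 1) n.succ_pos
  rw [Nat.add_sub_cancel] at h
  push_cast at h
  linear_combination -h

theorem monotone (hσ : 0 ≤ σ) (hϑ : 0 ≤ ϑ) (hν : ν₁ ∈ Set.Icc (0 : ℝ) 1)
    (ha : IsFearnheadSol σ ϑ ν₁ a) (h0 : a 0 = 0) (h1 : 0 ≤ a 1) : Monotone a := by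
  suffices h : ∀ n, 0 ≤ a n ∧ a n ≤ a (n + 1) from monotone_nat_of_le_succ fun n => (h n).2
  obtain ⟨hν₀, hν₁⟩ := hν
  intro n
  induction n with
  | zero => exact ⟨h0.ge, h0 ▸ h1⟩
  | succ n ih =>
    obtain ⟨hn, hle⟩ := ih
    have hn1 : 0 ≤ a (n + 1) := hn.trans hle
    have hc : 0 < ((n : ℝ) + 2) / 2 + ϑ * ν₁ := by positivity
    have hstep : 0 ≤ (((n : ℝ) + 2) / 2 + ϑ * ν₁) * (a (n + 2) - a (n + 1)) := by
      rw [ha.step n]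
      have : 0 ≤ 1 - ν₁ := sub_nonneg.mpr hν₁
      have : 0 ≤ a (n + 1) - a n := sub_nonneg.mpr hle
      positivity
    exact ⟨hn1, sub_nonneg.mp (nonneg_of_mul_nonneg_right hstep hc)⟩

theorem apply_one_nonpos (hσ : 0 ≤ σ) (hϑ : 0 ≤ ϑ) (hν : ν₁ ∈ Set.Icc (0 : ℝ) 1)
    (ha : IsFearnheadSol σ ϑ ν₁ a) (h0 : a 0 = 0) (hlim : Tendsto a atTop (nhds 0)) :
    a 1 ≤ 0 := by
  by_contra! h
  exact h.not_ge ((ha.monotone hσ hϑ hν h0 h.le).ge_of_tendsto hlim 1)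

theorem eq_zero_of_apply_zero_of_apply_one (hϑ : 0 ≤ ϑ) (hν₀ : 0 ≤ ν₁)
    (ha : IsFearnheadSol σ ϑ ν₁ a) (h0 : a 0 = 0) (h1 : a 1 = 0) : a = 0 := by
  suffices h : ∀ n, a n = 0 ∧ a (n + 1) = 0 from funext fun n => (h n).1
  intro n
  induction n with
  | zero => exact ⟨h0, h1⟩
  | succ n ih =>
    obtain ⟨hn, hn1⟩ := ih
    have hstep := ha.step n
    rw [hn, hn1] at hstep
    have hc : ((n : ℝ) + 2) / 2 + ϑ * ν₁ ≠ 0 := by positivity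
    exact ⟨hn1, by simpa [hc] using hstep⟩

theorem eq_zero (hσ : 0 ≤ σ) (hϑ : 0 ≤ ϑ) (hν : ν₁ ∈ Set.Icc (0 : ℝ) 1)
    (ha : IsFearnheadSol σ ϑ ν₁ a) (h0 : a 0 = 0) (hlim : Tendsto a atTop (nhds 0)) :
    a = 0 := by
  have h1 : a 1 ≤ 0 := ha.apply_one_nonpos hσ hϑ hν h0 hlim
  have h1' : -a 1 ≤ 0 :=
    ha.neg.apply_one_nonpos hσ hϑ hν (by simp [h0]) (neg_zero (G := ℝ) ▸ hlim.neg)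
  exact ha.eq_zero_of_apply_zero_of_apply_one hϑ hν.1 h0 (by linarith)

end IsFearnheadSol

theorem stmt_18_general (σ ϑ ν₁ : ℝ) (hσ : 0 ≤ σ) (hϑ : 0 ≤ ϑ)
    (hν₁ : ν₁ ∈ Set.Icc (0 : ℝ) 1)
    (a a' : ℕ → ℝ)
    (hrec : ∀ n : ℕ, 1 ≤ n →
      (((n : ℝ) + 1) / 2 + σ + ϑ) * a n
        = (((n : ℝ) + 1) / 2 + ϑ * ν₁) * a (n + 1) + σ * a (n - 1))
    (hrec' : ∀ n : ℕ, 1 ≤ n →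
      (((n : ℝ) + 1) / 2 + σ + ϑ) * a' n
        = (((n : ℝ) + 1) / 2 + ϑ * ν₁) * a' (n + 1) + σ * a' (n - 1))
    (h0 : a 0 = 1) (h0' : a' 0 = 1)
    (hlim : Tendsto a atTop (nhds 0)) (hlim' : Tendsto a' atTop (nhds 0)) :
    ∀ n, a n = a' n := by
  have hd : a - a' = 0 :=
    (IsFearnheadSol.sub hrec hrec').eq_zero hσ hϑ hν₁ (by simp [h0, h0'])
      (sub_zero (0 : ℝ) ▸ hlim.sub hlim')
  exact fun n => sub_eq_zero.mp (congrFun hd n)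

/-- Uniqueness of bounded solutions of Fearnhead's recursion
`((n+1)/2 + σ + ϑ)·aₙ = ((n+1)/2 + ϑν₁)·a_{n+1} + σ·a_{n−1}` with
boundary conditions `a₀ = 1` and `aₙ → 0`. -/
theorem stmt_18 (σ ϑ ν₁ : ℝ) (hσ : 0 ≤ σ) (hϑ : 0 ≤ ϑ)
    (hν₁ : ν₁ ∈ Set.Icc (0 : ℝ) 1)
    (a a' : ℕ → ℝ)
    (hbdd : ∃ C : ℝ, ∀ n, |a n| ≤ C) (hbdd' : ∃ C : ℝ, ∀ n, |a' n| ≤ C)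
    (hrec : ∀ n : ℕ, 1 ≤ n →
      (((n : ℝ) + 1) / 2 + σ + ϑ) * a n
        = (((n : ℝ) + 1) / 2 + ϑ * ν₁) * a (n + 1) + σ * a (n - 1))
    (hrec' : ∀ n : ℕ, 1 ≤ n →
      (((n : ℝ) + 1) / 2 + σ + ϑ) * a' n
        = (((n : ℝ) + 1) / 2 + ϑ * ν₁) * a' (n + 1) + σ * a' (n - 1))
    (h0 : a 0 = 1) (h0' : a' 0 = 1)
    (hlim : Tendsto a atTop (nhds 0)) (hlim' : Tendsto a' atTop (nhds 0)) :
    ∀ n, a n = a' n :=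
  stmt_18_general σ ϑ ν₁ hσ hϑ hν₁ a a' hrec hrec' h0 h0' hlim hlim'
end
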